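/- Let H : ℝ → ℍ be a cubic polynomial H(x₂) = h₀ + h₁x₂ + h₂x₂² + h₃x₂³ with quaternion coefficients. Define F : ℝ³ → ℍ by F(x₀,x₁,x₂) = exp(z)·H(x₂) + exp(z̄)·(⅛·(-j·H''') - ½·j·H'(x₂)), where exp(z) = e^{x₀}(cos x₁ + i sin x₁), exp(z̄) = e^{x₀}(cos x₁ - i sin x₁), and H', H''' are derivatives in x₂. Then F satisfies the iterated equation (∂/∂x₀ + i·∂/∂x₁ + j·∂/∂x₂)² F = 0, i.e. F is left bimonogenic. -/

import Mathlib

/-- The quaternion unit `i`. -/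
noncomputable def qi : Quaternion ℝ := ⟨0, 1, 0, 0⟩

/-- The quaternion unit `j`. -/
noncomputable def qj : Quaternion ℝ := ⟨0, 0, 1, 0⟩

/-- The generalized Cauchy–Riemann operator `∂_{x₀} + i ∂_{x₁} + j ∂_{x₂}`. -/
noncomputable def CR (G : ℝ → ℝ → ℝ → Quaternion ℝ) : ℝ → ℝ → ℝ → Quaternion ℝ :=
  fun y₀ y₁ y₂ =>
    deriv (fun t => G t y₁ y₂) y₀ + qi * deriv (fun t => G y₀ t y₂) y₁ +
      qj * deriv (fun t => G y₀ y₁ t) y₂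

/-! Write `F = exp(z)·p + exp(z̄)·q` with `p, q : ℝ → ℍ`. Both exponentials lie in `ℝ + ℝi`, so
`∂₀ + i∂₁` annihilates `exp(z)·p` and doubles `exp(z̄)·q`, while `j` swaps the two exponentials
(`j·exp z = exp z̄·j`). Hence `CR` acts on the pair `(p, q)` as `(p, q) ↦ (j q', 2q + j p')`, and
for `q = -⅛ j p''' - ½ j p'` two applications give `(¼ p'''', ⅛ j p''''')`, which vanishes when
`p'''' = 0`. -/

open scoped Quaternion

instance : CharZero ℍ := charZero_of_injective_algebraMap (algebraMap ℝ ℍ).injective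

@[simp] lemma qi_re : qi.re = 0 := rfl
@[simp] lemma qi_imI : qi.imI = 1 := rfl
@[simp] lemma qi_imJ : qi.imJ = 0 := rfl
@[simp] lemma qi_imK : qi.imK = 0 := rfl
@[simp] lemma qj_re : qj.re = 0 := rfl
@[simp] lemma qj_imI : qj.imI = 0 := rfl
@[simp] lemma qj_imJ : qj.imJ = 1 := rfl
@[simp] lemma qj_imK : qj.imK = 0 := rfl

lemma qi_mul_qi : qi * qi = -1 := by
  ext <;> simp

lemma qj_mul_qj : qj * qj = -1 := by
  ext <;> simp

noncomputable def expZ (x₀ x₁ : ℝ) : ℍ :=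
  (Real.exp x₀ : ℍ) * ((Real.cos x₁ : ℍ) + (Real.sin x₁ : ℍ) * qi)

noncomputable def expZbar (x₀ x₁ : ℝ) : ℍ :=
  (Real.exp x₀ : ℍ) * ((Real.cos x₁ : ℍ) - (Real.sin x₁ : ℍ) * qi)

lemma qj_mul_expZ (x₀ x₁ : ℝ) : qj * expZ x₀ x₁ = expZbar x₀ x₁ * qj := by
  ext <;> simp [expZ, expZbar]

lemma qj_mul_expZbar (x₀ x₁ : ℝ) : qj * expZbar x₀ x₁ = expZ x₀ x₁ * qj := by
  ext <;> simp [expZ, expZbar]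

lemma hasDerivAt_coe_pow (n : ℕ) (t : ℝ) :
    HasDerivAt (fun s : ℝ => (s : ℍ) ^ n) ((n * t ^ (n - 1) : ℝ) : ℍ) t := by
  simpa [← Quaternion.coe_mul_eq_smul] using (hasDerivAt_pow n t).smul_const (1 : ℍ)

lemma hasDerivAt_mul_coe_pow (a : ℍ) (n : ℕ) (t : ℝ) :
    HasDerivAt (fun s : ℝ => a * (s : ℍ) ^ n) (n * a * (t : ℍ) ^ (n - 1)) t := by
  simpa [Quaternion.coe_natCast, ← mul_assoc, (Nat.cast_commute n a).eq] using
    (hasDerivAt_coe_pow n t).const_mul a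

lemma hasDerivAt_expZ_fst (x₀ x₁ : ℝ) :
    HasDerivAt (fun t => expZ t x₁) (expZ x₀ x₁) x₀ := by
  simpa [expZ, Quaternion.coe_mul_eq_smul] using
    (Real.hasDerivAt_exp x₀).smul_const ((Real.cos x₁ : ℍ) + (Real.sin x₁ : ℍ) * qi)

lemma hasDerivAt_expZ_snd (x₀ x₁ : ℝ) :
    HasDerivAt (fun t => expZ x₀ t) (qi * expZ x₀ x₁) x₁ := by
  have h := ((Real.hasDerivAt_cos x₁).smul_const (1 : ℍ)).add
    ((Real.hasDerivAt_sin x₁).smul_const qi)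
  refine (h.const_mul (Real.exp x₀ : ℍ)).congr_deriv ?_ |>.congr_of_eventuallyEq ?_
  · ext <;> simp [expZ]
  · exact Filter.Eventually.of_forall fun t => by simp [expZ, ← Quaternion.coe_mul_eq_smul]

lemma expZbar_eq_expZ_neg (x₀ x₁ : ℝ) : expZbar x₀ x₁ = expZ x₀ (-x₁) := by
  simp [expZ, expZbar, sub_eq_add_neg]

lemma hasDerivAt_expZbar_fst (x₀ x₁ : ℝ) :
    HasDerivAt (fun t => expZbar t x₁) (expZbar x₀ x₁) x₀ := by
  simpa only [expZbar_eq_expZ_neg] using hasDerivAt_expZ_fst x₀ (-x₁)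

lemma hasDerivAt_expZbar_snd (x₀ x₁ : ℝ) :
    HasDerivAt (fun t => expZbar x₀ t) (-(qi * expZbar x₀ x₁)) x₁ := by
  simpa [expZbar_eq_expZ_neg, Function.comp_def] using
    (hasDerivAt_expZ_snd x₀ (-x₁)).scomp x₁ (hasDerivAt_neg x₁)

noncomputable def expComb (p q : ℝ → ℍ) (x₀ x₁ x₂ : ℝ) : ℍ :=
  expZ x₀ x₁ * p x₂ + expZbar x₀ x₁ * q x₂

@[simp] lemma expComb_zero : expComb 0 0 = 0 := by
  funext; simp [expComb]

lemma CR_expComb {p q p' q' : ℝ → ℍ} (hp : ∀ t, HasDerivAt p (p' t) t)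
    (hq : ∀ t, HasDerivAt q (q' t) t) :
    CR (expComb p q) = expComb (fun t => qj * q' t) (fun t => 2 * q t + qj * p' t) := by
  funext x₀ x₁ x₂
  have d₀ := ((hasDerivAt_expZ_fst x₀ x₁).mul_const (p x₂)).fun_add
    ((hasDerivAt_expZbar_fst x₀ x₁).mul_const (q x₂))
  have d₁ := ((hasDerivAt_expZ_snd x₀ x₁).mul_const (p x₂)).fun_add
    ((hasDerivAt_expZbar_snd x₀ x₁).mul_const (q x₂))
  have d₂ := ((hp x₂).const_mul (expZ x₀ x₁)).fun_add ((hq x₂).const_mul (expZbar x₀ x₁))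
  simp only [CR, expComb, d₀.deriv, d₁.deriv, d₂.deriv]
  simp only [mul_add, neg_mul, mul_neg, ← mul_assoc, qi_mul_qi, qj_mul_expZ, qj_mul_expZbar]
  noncomm_ring

-- A constant `p₃ = p'''` is the one-variable form of `Δ²p = 0`, and the second component is
-- `⅛ ∂_y³ p - ½ ∂_y p` with `∂_y = qj · d/dx₂`.
theorem CR_CR_expComb_eq_zero {p p₁ p₂ : ℝ → ℍ} {p₃ : ℍ}
    (h₁ : ∀ t, HasDerivAt p (p₁ t) t) (h₂ : ∀ t, HasDerivAt p₁ (p₂ t) t)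
    (h₃ : ∀ t, HasDerivAt p₂ p₃ t) :
    CR (CR (expComb p fun t => 1 / 8 * -(qj * p₃) - 1 / 2 * qj * p₁ t)) = 0 := by
  have hq (t : ℝ) : HasDerivAt (fun t => 1 / 8 * -(qj * p₃) - 1 / 2 * qj * p₁ t)
      (-(1 / 2 * qj * p₂ t)) t := by
    simpa using (hasDerivAt_const t _).fun_sub ((h₂ t).const_mul (1 / 2 * qj))
  rw [CR_expComb h₁ hq,
    CR_expComb (fun _ => ((h₃ _).const_mul (1 / 2 * qj)).fun_neg.const_mul qj)
      (fun _ => ((hq _).const_mul 2).fun_add ((h₂ _).const_mul qj))]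
  convert expComb_zero using 2 <;> funext t
  · simp only [Pi.zero_apply, mul_neg, ← mul_assoc]
    norm_num
  · simp only [Pi.zero_apply, mul_add, mul_sub, mul_neg, ← mul_assoc, qj_mul_qj]
    norm_num

theorem exp_steering_bimonogenic_cubic (h₀ h₁ h₂ h₃ : Quaternion ℝ)
    (F : ℝ → ℝ → ℝ → Quaternion ℝ)
    (hF : ∀ y₀ y₁ y₂ : ℝ, F y₀ y₁ y₂ =
      ((Real.exp y₀ : ℝ) : Quaternion ℝ) *
          (((Real.cos y₁ : ℝ) : Quaternion ℝ) + ((Real.sin y₁ : ℝ) : Quaternion ℝ) * qi) *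
          (h₀ + h₁ * ((y₂ : ℝ) : Quaternion ℝ) + h₂ * ((y₂ : ℝ) : Quaternion ℝ) ^ 2 +
            h₃ * ((y₂ : ℝ) : Quaternion ℝ) ^ 3) +
        ((Real.exp y₀ : ℝ) : Quaternion ℝ) *
          (((Real.cos y₁ : ℝ) : Quaternion ℝ) - ((Real.sin y₁ : ℝ) : Quaternion ℝ) * qi) *
          ((1 / 8 : Quaternion ℝ) * (-(qj * (6 * h₃))) -
            (1 / 2 : Quaternion ℝ) * qj *
              (h₁ + 2 * h₂ * ((y₂ : ℝ) : Quaternion ℝ) +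
                3 * h₃ * ((y₂ : ℝ) : Quaternion ℝ) ^ 2)))
    (x₀ x₁ x₂ : ℝ) :
    CR (CR F) x₀ x₁ x₂ = 0 := by
  have d₁ (t : ℝ) :
      HasDerivAt (fun s : ℝ => h₀ + h₁ * (s : ℍ) + h₂ * (s : ℍ) ^ 2 + h₃ * (s : ℍ) ^ 3)
        (h₁ + 2 * h₂ * (t : ℍ) + 3 * h₃ * (t : ℍ) ^ 2) t := by
    simpa using ((((hasDerivAt_const t h₀).fun_add (hasDerivAt_mul_coe_pow h₁ 1 t)).fun_add
      (hasDerivAt_mul_coe_pow h₂ 2 t)).fun_add (hasDerivAt_mul_coe_pow h₃ 3 t))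
  have d₂ (t : ℝ) : HasDerivAt (fun s : ℝ => h₁ + 2 * h₂ * (s : ℍ) + 3 * h₃ * (s : ℍ) ^ 2)
      (2 * h₂ + 6 * h₃ * (t : ℍ)) t := by
    simpa [← mul_assoc, show (2 : ℍ) * 3 = 6 by norm_num] using
      ((hasDerivAt_const t h₁).fun_add (hasDerivAt_mul_coe_pow (2 * h₂) 1 t)).fun_add
        (hasDerivAt_mul_coe_pow (3 * h₃) 2 t)
  have d₃ (t : ℝ) : HasDerivAt (fun s : ℝ => 2 * h₂ + 6 * h₃ * (s : ℍ)) (6 * h₃) t := by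
    simpa using (hasDerivAt_const t (2 * h₂)).fun_add (hasDerivAt_mul_coe_pow (6 * h₃) 1 t)
  have hF_expComb : F = expComb _ _ := funext₃ hF
  rw [hF_expComb, CR_CR_expComb_eq_zero d₁ d₂ d₃]
  rfl
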